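/- Projected subgradient convergence in function value: let X ⊆ ℝ^d be compact convex, f convex with subgradients bounded by G on X, and step sizes α^t > 0 with ∑ α^t = ∞ and ∑ (α^t)² < ∞. Then the iterates x^{t+1} = proj_X(x^t − α^t g^t), g^t a subgradient of f at x^t, satisfy liminf_{t→∞} f(x^t) = min_{z∈X} f(z). -/

import Mathlib

/-!
Projecting onto a convex set does not increase the distance to any point `z` of it, so the
subgradient inequality gives
`‖x (t+1) - z‖² ≤ ‖x t - z‖² - 2 α t (f (x t) - f z) + (α t)² G²`.
Telescoping bounds `∑ α t (f (x t) - f z)` uniformly in the horizon, because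
`∑ (α t)² < ∞`. Were `f (x t) - f z ≥ ε > 0` eventually, this sum would dominate
`ε ∑ α t = ∞`; hence `liminf f (x t) ≤ f z` for every `z ∈ X`, while `f (x t) ≥ inf_X f`
since the iterates stay in `X`.
-/

open Filter Finset
open scoped InnerProductSpace

theorem tendsto_sum_range_mul_atTop_of_not_summable {a e : ℕ → ℝ} (ha : ∀ t, 0 ≤ a t)
    (hna : ¬Summable a) {ε : ℝ} (hε : 0 < ε) (he : ∀ᶠ t in atTop, ε ≤ e t) :
    Tendsto (fun T => ∑ t ∈ range T, a t * e t) atTop atTop := by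
  obtain ⟨T₀, hT₀⟩ := eventually_atTop.mp he
  have hA : Tendsto (fun T => ∑ t ∈ range T, a t) atTop atTop :=
    (not_summable_iff_tendsto_nat_atTop_of_nonneg ha).mp hna
  refine tendsto_atTop_mono' _ ?_ (tendsto_atTop_add_const_left _
    (∑ t ∈ range T₀, a t * e t - ε * ∑ t ∈ range T₀, a t) (hA.const_mul_atTop hε))
  filter_upwards [eventually_ge_atTop T₀] with T hT
  have hIco : ε * ∑ t ∈ Ico T₀ T, a t ≤ ∑ t ∈ Ico T₀ T, a t * e t := by
    rw [mul_sum]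
    refine sum_le_sum fun t ht => ?_
    rw [mul_comm]
    exact mul_le_mul_of_nonneg_left (hT₀ t (mem_Ico.mp ht).1) (ha t)
  rw [← sum_range_add_sum_Ico _ hT, ← sum_range_add_sum_Ico _ hT]
  linarith

theorem liminf_le_of_sum_range_mul_sub_le {a u : ℕ → ℝ} (ha : ∀ t, 0 ≤ a t)
    (hna : ¬Summable a) (hu : IsBoundedUnder (· ≥ ·) atTop u) {c C : ℝ}
    (hC : ∀ T, ∑ t ∈ range T, a t * (u t - c) ≤ C) :
    liminf u atTop ≤ c := by
  by_contra! hlt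
  set ε := (liminf u atTop - c) / 2
  have hε : 0 < ε := by simp only [ε]; linarith
  have he : ∀ᶠ t in atTop, ε ≤ u t - c := by
    filter_upwards [eventually_lt_of_lt_liminf (show c + ε < liminf u atTop by
      simp only [ε]; linarith) hu] with t ht
    linarith
  obtain ⟨T, hT⟩ :=
    ((tendsto_sum_range_mul_atTop_of_not_summable ha hna hε he).eventually_gt_atTop C).exists
  exact (hC T).not_gt hT

theorem sum_range_mul_le_of_le_sub_mul_add_sq {D a e : ℕ → ℝ} {c : ℝ} (hc : 0 ≤ c)
    (hD : ∀ t, 0 ≤ D t) (ha : Summable fun t => a t ^ 2)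
    (hstep : ∀ t, D (t + 1) ≤ D t - 2 * a t * e t + c * a t ^ 2) (T : ℕ) :
    ∑ t ∈ range T, a t * e t ≤ (D 0 + c * ∑' t, a t ^ 2) / 2 := by
  have htelescope : ∀ T, 2 * ∑ t ∈ range T, a t * e t + D T ≤
      D 0 + c * ∑ t ∈ range T, a t ^ 2 := by
    intro T
    induction T with
    | zero => simp
    | succ n ih =>
      simp only [sum_range_succ]
      linarith [hstep n]
  have hpartial : ∑ t ∈ range T, a t ^ 2 ≤ ∑' t, a t ^ 2 :=
    ha.sum_le_tsum _ fun t _ => sq_nonneg (a t)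
  nlinarith [htelescope T, hD T]

section ProjectedStep

variable {E : Type*} [NormedAddCommGroup E] [InnerProductSpace ℝ E]

theorem norm_sub_le_of_forall_norm_sub_le {K : Set E} (hK : Convex ℝ K) {u v z : E}
    (hv : v ∈ K) (hnearest : ∀ w ∈ K, ‖u - v‖ ≤ ‖u - w‖) (hz : z ∈ K) :
    ‖v - z‖ ≤ ‖u - z‖ := by
  have hinf : ‖u - v‖ = ⨅ w : K, ‖u - w‖ := by
    have : Nonempty K := ⟨⟨v, hv⟩⟩
    exact le_antisymm (le_ciInf fun w => hnearest w w.2)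
      (ciInf_le (f := fun w : K => ‖u - w‖)
        ⟨0, Set.forall_mem_range.2 fun _ => norm_nonneg _⟩ ⟨v, hv⟩)
  have hobtuse : ⟪u - v, z - v⟫_ℝ ≤ 0 :=
    (norm_eq_iInf_iff_real_inner_le_zero hK hv).mp hinf z hz
  have hsq : ‖u - z‖ ^ 2 = ‖u - v‖ ^ 2 - 2 * ⟪u - v, z - v⟫_ℝ + ‖v - z‖ ^ 2 := by
    rw [show u - z = (u - v) - (z - v) by abel, norm_sub_sq_real, norm_sub_rev z v]
  exact (pow_le_pow_iff_left₀ (norm_nonneg _) (norm_nonneg _) two_ne_zero).mp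
    (by nlinarith [sq_nonneg ‖u - v‖])

theorem norm_sub_sq_le_of_subgradient_step {f : E → ℝ} {x g v z : E} {a G : ℝ} (ha : 0 ≤ a)
    (hg : ‖g‖ ≤ G) (hsub : f z ≥ f x + ⟪g, z - x⟫_ℝ) (hv : ‖v - z‖ ≤ ‖x - a • g - z‖) :
    ‖v - z‖ ^ 2 ≤ ‖x - z‖ ^ 2 - 2 * a * (f x - f z) + G ^ 2 * a ^ 2 := by
  have hexpand :
      ‖x - a • g - z‖ ^ 2 = ‖x - z‖ ^ 2 - 2 * a * ⟪g, x - z⟫_ℝ + a ^ 2 * ‖g‖ ^ 2 := by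
    rw [show x - a • g - z = (x - z) - a • g by abel, norm_sub_sq_real, real_inner_smul_right,
      real_inner_comm, norm_smul, Real.norm_eq_abs, mul_pow, sq_abs]
    ring
  have hdescent : f x - f z ≤ ⟪g, x - z⟫_ℝ := by
    rw [← neg_sub z x, inner_neg_right]
    linarith
  have hg2 : ‖g‖ ^ 2 ≤ G ^ 2 := pow_le_pow_left₀ (norm_nonneg g) hg 2
  have hv2 : ‖v - z‖ ^ 2 ≤ ‖x - a • g - z‖ ^ 2 := pow_le_pow_left₀ (norm_nonneg _) hv 2
  nlinarith [mul_le_mul_of_nonneg_left hdescent ha,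
    mul_le_mul_of_nonneg_left hg2 (sq_nonneg a)]

theorem sub_mul_le_of_subgradient {f : E → ℝ} {x g y : E} {G R : ℝ}
    (hsub : f y ≥ f x + ⟪g, y - x⟫_ℝ) (hg : ‖g‖ ≤ G) (hR : ‖y - x‖ ≤ R) :
    f x - G * R ≤ f y := by
  have hinner : |⟪g, y - x⟫_ℝ| ≤ G * R :=
    (abs_real_inner_le_norm g (y - x)).trans
      (mul_le_mul hg hR (norm_nonneg _) ((norm_nonneg g).trans hg))
  linarith [neg_abs_le ⟪g, y - x⟫_ℝ]

end ProjectedStep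

theorem projected_subgradient_liminf_general (d : ℕ)
    (X : Set (EuclideanSpace ℝ (Fin d)))
    (hXcompact : IsCompact X) (hXconvex : Convex ℝ X)
    (f : EuclideanSpace ℝ (Fin d) → ℝ)
    (G : ℝ)
    (α : ℕ → ℝ) (hαpos : ∀ t, 0 < α t)
    (hα1 : ¬ Summable α) (hα2 : Summable (fun t => (α t) ^ 2))
    (x : ℕ → EuclideanSpace ℝ (Fin d)) (hx0 : x 0 ∈ X)
    (g : ℕ → EuclideanSpace ℝ (Fin d))
    (hsub : ∀ t, ∀ y, f y ≥ f (x t) + inner ℝ (g t) (y - x t))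
    (hGbound : ∀ t, ‖g t‖ ≤ G)
    (hproj : ∀ t, x (t + 1) ∈ X ∧
      ∀ y ∈ X, ‖x t - α t • g t - x (t + 1)‖ ≤ ‖x t - α t • g t - y‖) :
    Filter.liminf (fun t => f (x t)) Filter.atTop = sInf (f '' X) := by
  have hxX : ∀ t, x t ∈ X := fun t => Nat.recOn t hx0 fun n _ => (hproj n).1
  obtain ⟨R, hR⟩ := Metric.isBounded_iff.mp hXcompact.isBounded
  have hdiam : ∀ y ∈ X, ∀ t, ‖y - x t‖ ≤ R := fun y hy t =>
    dist_eq_norm y (x t) ▸ hR hy (hxX t)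
  have hbdd : BddBelow (f '' X) := by
    refine ⟨f (x 0) - G * R, ?_⟩
    rintro _ ⟨y, hy, rfl⟩
    exact sub_mul_le_of_subgradient (hsub 0 y) (hGbound 0) (hdiam y hy 0)
  have hlower : ∀ t, sInf (f '' X) ≤ f (x t) := fun t => csInf_le hbdd ⟨x t, hxX t, rfl⟩
  have hupper : ∀ t, f (x t) ≤ f (x 0) + G * R := fun t => by
    linarith [sub_mul_le_of_subgradient (hsub t (x 0)) (hGbound t) (hdiam _ hx0 t)]
  refine le_antisymm (le_csInf ⟨_, x 0, hx0, rfl⟩ ?_)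
    (le_liminf_of_le (isBoundedUnder_of ⟨_, hupper⟩).isCoboundedUnder_ge (.of_forall hlower))
  rintro _ ⟨z, hz, rfl⟩
  refine liminf_le_of_sum_range_mul_sub_le (fun t => (hαpos t).le) hα1
    (isBoundedUnder_of ⟨_, hlower⟩) (sum_range_mul_le_of_le_sub_mul_add_sq (sq_nonneg G)
      (fun t => sq_nonneg ‖x t - z‖) hα2 fun t => ?_)
  exact norm_sub_sq_le_of_subgradient_step (hαpos t).le (hGbound t) (hsub t z)
    (norm_sub_le_of_forall_norm_sub_le hXconvex (hproj t).1 (hproj t).2 hz)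

theorem projected_subgradient_liminf (d : ℕ)
    (X : Set (EuclideanSpace ℝ (Fin d)))
    (hXcompact : IsCompact X) (hXconvex : Convex ℝ X) (hXne : X.Nonempty)
    (f : EuclideanSpace ℝ (Fin d) → ℝ) (hf : ConvexOn ℝ Set.univ f)
    (G : ℝ)
    (α : ℕ → ℝ) (hαpos : ∀ t, 0 < α t)
    (hα1 : ¬ Summable α) (hα2 : Summable (fun t => (α t) ^ 2))
    (x : ℕ → EuclideanSpace ℝ (Fin d)) (hx0 : x 0 ∈ X)
    (g : ℕ → EuclideanSpace ℝ (Fin d))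
    (hsub : ∀ t, ∀ y, f y ≥ f (x t) + inner ℝ (g t) (y - x t))
    (hGbound : ∀ t, ‖g t‖ ≤ G)
    (hproj : ∀ t, x (t + 1) ∈ X ∧
      ∀ y ∈ X, ‖x t - α t • g t - x (t + 1)‖ ≤ ‖x t - α t • g t - y‖) :
    Filter.liminf (fun t => f (x t)) Filter.atTop = sInf (f '' X) :=
  projected_subgradient_liminf_general d X hXcompact hXconvex f G α hαpos hα1 hα2 x hx0 g hsub
    hGbound hproj
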